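/- Let Σ = {R(x) → ∃z R(z) ∧ S(x)} and I0 = {R(a)}. Then no standard chase sequence with Σ from I0 terminates, but the core chase with Σ from I0 terminates after one step in the instance {R(a), S(a)}, which satisfies Σ. -/
import Mathlib


/-! Common framework: instances, homomorphisms, tgds, chase variants. -/

inductive Val where
  | c : ℕ → Val
  | n : ℕ → Val
deriving DecidableEq

structure Atom (Rel : Type) where
  rel : Rel
  args : List Val

abbrev Inst (Rel : Type) := Set (Atom Rel)

def mapAtom {Rel : Type} (h : Val → Val) (a : Atom Rel) : Atom Rel :=
  ⟨a.rel, a.args.map h⟩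

/-- Homomorphisms fix constants. -/
def ConstFix (h : Val → Val) : Prop := ∀ k, h (Val.c k) = Val.c k

def IsHom {Rel : Type} (h : Val → Val) (I J : Inst Rel) : Prop :=
  ConstFix h ∧ ∀ a ∈ I, mapAtom h a ∈ J

def domI {Rel : Type} (I : Inst Rel) : Set Val :=
  {v | ∃ a ∈ I, v ∈ a.args}

/-- Terms in dependencies: `inl v` is variable `v`, `inr k` is constant `k`. -/
abbrev Tm := ℕ ⊕ ℕ

structure TAtom (Rel : Type) where
  rel : Rel
  args : List Tm

def TAtom.vars {Rel : Type} (a : TAtom Rel) : Set ℕ := {v | Sum.inl v ∈ a.args}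

def varsOf {Rel : Type} (S : Set (TAtom Rel)) : Set ℕ := ⋃ a ∈ S, a.vars

/-- A tuple-generating dependency: body → ∃ z̄ head; the existential
variables are exactly the head variables not occurring in the body. -/
structure TGD (Rel : Type) where
  body : Set (TAtom Rel)
  head : Set (TAtom Rel)

def applyT (g : ℕ → Val) : Tm → Val
  | Sum.inl v => g v
  | Sum.inr k => Val.c k

def applyA {Rel : Type} (g : ℕ → Val) (a : TAtom Rel) : Atom Rel :=
  ⟨a.rel, a.args.map (applyT g)⟩

def instT {Rel : Type} (g : ℕ → Val) (S : Set (TAtom Rel)) : Inst Rel :=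
  (applyA g) '' S

def frontierV {Rel : Type} (ξ : TGD Rel) : Set ℕ := varsOf ξ.body ∩ varsOf ξ.head

def evars {Rel : Type} (ξ : TGD Rel) : Set ℕ := varsOf ξ.head \ varsOf ξ.body

def EqOnBody {Rel : Type} (ξ : TGD Rel) (g g' : ℕ → Val) : Prop :=
  ∀ v ∈ varsOf ξ.body, g v = g' v

def EqOnFrontier {Rel : Type} (ξ : TGD Rel) (g g' : ℕ → Val) : Prop :=
  ∀ v ∈ frontierV ξ, g v = g' v

/-- `(ξ, g)` is a trigger on `I`. -/
def IsTrigger {Rel : Type} (ξ : TGD Rel) (g : ℕ → Val) (I : Inst Rel) : Prop :=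
  instT g ξ.body ⊆ I

/-- `(ξ, g)` is an active trigger on `I`. -/
def Active {Rel : Type} (ξ : TGD Rel) (g : ℕ → Val) (I : Inst Rel) : Prop :=
  IsTrigger ξ g I ∧ ¬ ∃ g', EqOnBody ξ g g' ∧ instT g' ξ.head ⊆ I

/-- `I` satisfies the tgd `ξ`. -/
def Sat {Rel : Type} (I : Inst Rel) (ξ : TGD Rel) : Prop := ∀ g, ¬ Active ξ g I

/-- `g'` extends `g` by assigning distinct fresh nulls to the existential
variables of `ξ`. -/
def FreshExt {Rel : Type} (I : Inst Rel) (ξ : TGD Rel) (g g' : ℕ → Val) : Prop :=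
  EqOnBody ξ g g' ∧
  (∀ v ∈ evars ξ, (∃ k, g' v = Val.n k) ∧ g' v ∉ domI I) ∧
  (∀ v ∈ evars ξ, ∀ w ∈ evars ξ, g' v = g' w → v = w)

def NoActive {Rel : Type} (D : Set (TGD Rel)) (I : Inst Rel) : Prop :=
  ∀ ξ ∈ D, ∀ g, ¬ Active ξ g I

/-- A standard-chase step. -/
def StdStep {Rel : Type} (D : Set (TGD Rel)) (I J : Inst Rel) : Prop :=
  ∃ ξ ∈ D, ∃ g g', Active ξ g I ∧ FreshExt I ξ g g' ∧ J = I ∪ instT g' ξ.head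

/-- A standard chase sequence (stuttering once no active trigger remains). -/
structure StdSeq {Rel : Type} (D : Set (TGD Rel)) (I : Inst Rel) where
  inst : ℕ → Inst Rel
  init : inst 0 = I
  step : ∀ i, StdStep D (inst i) (inst (i + 1)) ∨
    (NoActive D (inst i) ∧ inst (i + 1) = inst i)

def StdSeq.Terminates {Rel : Type} {D : Set (TGD Rel)} {I : Inst Rel}
    (s : StdSeq D I) : Prop :=
  ∃ i, NoActive D (s.inst i)

/-- Fairness: every active trigger is eventually fired or deactivated. -/
def StdSeq.Fair {Rel : Type} {D : Set (TGD Rel)} {I : Inst Rel}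
    (s : StdSeq D I) : Prop :=
  ∀ i, ∀ ξ ∈ D, ∀ g, Active ξ g (s.inst i) → ∃ j, i ≤ j ∧ ¬ Active ξ g (s.inst j)

/-- An oblivious chase sequence: fires triggers (active or not), each
equivalence class (identified by the body variables) at most once. -/
structure OblSeq {Rel : Type} (D : Set (TGD Rel)) (I : Inst Rel) where
  inst : ℕ → Inst Rel
  fired : ℕ → Option (TGD Rel × (ℕ → Val))
  init : inst 0 = I
  step : ∀ i, (fired i).elim (inst (i + 1) = inst i)
    (fun p => p.1 ∈ D ∧ IsTrigger p.1 p.2 (inst i) ∧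
      ∃ g', FreshExt (inst i) p.1 p.2 g' ∧ inst (i + 1) = inst i ∪ instT g' p.1.head)
  once : ∀ i j ξ g g', fired i = some (ξ, g) → fired j = some (ξ, g') →
    EqOnBody ξ g g' → i = j

def OblSeq.Fires {Rel : Type} {D : Set (TGD Rel)} {I : Inst Rel}
    (s : OblSeq D I) (ξ : TGD Rel) (g : ℕ → Val) : Prop :=
  ∃ j g₀, s.fired j = some (ξ, g₀) ∧ EqOnBody ξ g₀ g

/-- The oblivious chase terminates: only finitely many firings occur. -/
def OblSeq.Terminates {Rel : Type} {D : Set (TGD Rel)} {I : Inst Rel}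
    (s : OblSeq D I) : Prop :=
  ∃ i, ∀ j, i ≤ j → s.fired j = none

/-- Fairness: every applicable trigger is eventually fired. -/
def OblSeq.Fair {Rel : Type} {D : Set (TGD Rel)} {I : Inst Rel}
    (s : OblSeq D I) : Prop :=
  ∀ i, ∀ ξ ∈ D, ∀ g, IsTrigger ξ g (s.inst i) → s.Fires ξ g

/-- A semi-oblivious chase sequence: like the oblivious one, but triggers are
identified when they agree on the frontierV variables. -/
structure SoblSeq {Rel : Type} (D : Set (TGD Rel)) (I : Inst Rel) where
  inst : ℕ → Inst Rel
  fired : ℕ → Option (TGD Rel × (ℕ → Val))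
  init : inst 0 = I
  step : ∀ i, (fired i).elim (inst (i + 1) = inst i)
    (fun p => p.1 ∈ D ∧ IsTrigger p.1 p.2 (inst i) ∧
      ∃ g', FreshExt (inst i) p.1 p.2 g' ∧ inst (i + 1) = inst i ∪ instT g' p.1.head)
  once : ∀ i j ξ g g', fired i = some (ξ, g) → fired j = some (ξ, g') →
    EqOnFrontier ξ g g' → i = j

def SoblSeq.Fires {Rel : Type} {D : Set (TGD Rel)} {I : Inst Rel}
    (s : SoblSeq D I) (ξ : TGD Rel) (g : ℕ → Val) : Prop :=
  ∃ j g₀, s.fired j = some (ξ, g₀) ∧ EqOnFrontier ξ g₀ g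

def SoblSeq.Terminates {Rel : Type} {D : Set (TGD Rel)} {I : Inst Rel}
    (s : SoblSeq D I) : Prop :=
  ∃ i, ∀ j, i ≤ j → s.fired j = none

def SoblSeq.Fair {Rel : Type} {D : Set (TGD Rel)} {I : Inst Rel}
    (s : SoblSeq D I) : Prop :=
  ∀ i, ∀ ξ ∈ D, ∀ g, IsTrigger ξ g (s.inst i) → s.Fires ξ g

/-- `C` is a core of `I`. -/
def IsCore {Rel : Type} (I C : Inst Rel) : Prop :=
  C ⊆ I ∧ (∃ h, IsHom h I I ∧ ∀ a ∈ I, mapAtom h a ∈ C) ∧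
  ¬ ∃ g, IsHom g C C ∧ (mapAtom g '' C) ⊂ C

/-- `E` chooses, for every active trigger, a fresh-null extension, with the
fresh nulls of distinct trigger classes pairwise distinct. -/
def GoodE {Rel : Type} (D : Set (TGD Rel)) (I : Inst Rel)
    (E : TGD Rel → (ℕ → Val) → (ℕ → Val)) : Prop :=
  (∀ ξ ∈ D, ∀ g, Active ξ g I → FreshExt I ξ g (E ξ g)) ∧
  (∀ ξ₁ ∈ D, ∀ ξ₂ ∈ D, ∀ g₁ g₂, Active ξ₁ g₁ I → Active ξ₂ g₂ I →
    ∀ v ∈ evars ξ₁, ∀ w ∈ evars ξ₂, E ξ₁ g₁ v = E ξ₂ g₂ w →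
      ξ₁ = ξ₂ ∧ EqOnBody ξ₁ g₁ g₂ ∧ v = w)

/-- The result of firing all active triggers in parallel. -/
def ParRes {Rel : Type} (D : Set (TGD Rel)) (I : Inst Rel)
    (E : TGD Rel → (ℕ → Val) → (ℕ → Val)) : Inst Rel :=
  I ∪ {a | ∃ ξ ∈ D, ∃ g, Active ξ g I ∧ a ∈ instT (E ξ g) ξ.head}

/-- A core-chase step: fire all active triggers in parallel, then take a core. -/
def CoreStep {Rel : Type} (D : Set (TGD Rel)) (I J : Inst Rel) : Prop :=
  ∃ E, GoodE D I E ∧ IsCore (ParRes D I E) J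

inductive RS where
  | R | S

namespace Stmt7

def xi : TGD RS := ⟨{⟨RS.R, [Sum.inl 0]⟩}, {⟨RS.R, [Sum.inl 1]⟩, ⟨RS.S, [Sum.inl 0]⟩}⟩
def I0 : Inst RS := {⟨RS.R, [Val.c 0]⟩}
def J0 : Inst RS := {⟨RS.R, [Val.c 0]⟩, ⟨RS.S, [Val.c 0]⟩}

lemma instT_body (g : ℕ → Val) : instT g xi.body = {⟨RS.R, [g 0]⟩} := by
  simp [instT, xi, applyA, applyT]

lemma instT_head (g : ℕ → Val) :
    instT g xi.head = {⟨RS.R, [g 1]⟩, ⟨RS.S, [g 0]⟩} := by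
  simp [instT, xi, Set.image_insert_eq, applyA, applyT]

lemma varsOf_body : varsOf xi.body = {0} := by
  ext v; simp [varsOf, xi, TAtom.vars]

lemma mem_evars (v : ℕ) : v ∈ evars xi ↔ v = 1 := by
  simp only [evars, Set.mem_diff, varsOf, xi, TAtom.vars]
  simp only [Set.mem_iUnion, Set.mem_insert_iff, Set.mem_singleton_iff, Set.mem_setOf_eq]
  constructor
  · rintro ⟨⟨a, ha, hv⟩, hnb⟩
    rcases ha with rfl | rfl
    · simpa using hv
    · exfalso; apply hnb; exact ⟨_, rfl, hv⟩
  · rintro rfl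
    exact ⟨⟨_, Or.inl rfl, by simp⟩, by rintro ⟨a, rfl, hv⟩; simpa using hv⟩

lemma one_mem_evars : (1 : ℕ) ∈ evars xi := (mem_evars 1).mpr rfl

lemma eqOnBody_iff (g g' : ℕ → Val) : EqOnBody xi g g' ↔ g 0 = g' 0 := by
  constructor
  · intro h; exact h 0 (by rw [varsOf_body]; rfl)
  · intro h v hv
    rw [varsOf_body] at hv
    rcases hv with rfl
    exact h

lemma active_iff (g : ℕ → Val) (I : Inst RS) :
    Active xi g I ↔ (⟨RS.R, [g 0]⟩ : Atom RS) ∈ I ∧ (⟨RS.S, [g 0]⟩ : Atom RS) ∉ I := by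
  constructor
  · rintro ⟨ht, hna⟩
    rw [IsTrigger, instT_body] at ht
    refine ⟨ht rfl, fun hS => hna ⟨fun _ => g 0, (eqOnBody_iff _ _).mpr rfl, ?_⟩⟩
    rw [instT_head]
    rintro b (rfl | rfl)
    · exact ht rfl
    · exact hS
  · rintro ⟨hR, hS⟩
    refine ⟨by rw [IsTrigger, instT_body]; rintro b rfl; exact hR, ?_⟩
    rintro ⟨g', hb, hsub⟩
    have h0 : g' 0 = g 0 := ((eqOnBody_iff g g').mp hb).symm
    apply hS
    have : (⟨RS.S, [g' 0]⟩ : Atom RS) ∈ I := by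
      apply hsub; rw [instT_head]; right; rfl
    rwa [h0] at this

/-! ### Part 1 : standard chase does not terminate -/

def Inv (I : Inst RS) : Prop :=
  ∃ v, (⟨RS.R, [v]⟩ : Atom RS) ∈ I ∧ (⟨RS.S, [v]⟩ : Atom RS) ∉ I

lemma inv_not_noactive {I : Inst RS} (h : Inv I) : ¬ NoActive {xi} I := by
  rcases h with ⟨v, h1, h2⟩
  intro hna
  exact hna xi rfl (fun _ => v) ((active_iff _ _).mpr ⟨h1, h2⟩)

lemma inv_step {I J : Inst RS} (h : StdStep {xi} I J) : Inv J := by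
  rcases h with ⟨ζ, hζ, g, g', hact, hfe, rfl⟩
  rcases hζ with rfl
  rcases hfe with ⟨heqb, hfresh, -⟩
  obtain ⟨⟨k, hk⟩, hnd⟩ := hfresh 1 one_mem_evars
  refine ⟨g' 1, Or.inr ?_, ?_⟩
  · rw [instT_head]; left; rfl
  · rintro (hin | hin)
    · exact hnd ⟨_, hin, by simp⟩
    · rw [instT_head] at hin
      rcases hin with hin | hin
      · exact RS.noConfusion (congrArg Atom.rel hin)
      · have h1 : g' 1 = g' 0 := by simpa using congrArg Atom.args hin
        have h0 : g' 0 = g 0 := ((eqOnBody_iff g g').mp heqb).symm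
        have hR : (⟨RS.R, [g 0]⟩ : Atom RS) ∈ I := ((active_iff g I).mp hact).1
        exact hnd ⟨_, hR, by simp [h1, h0]⟩

lemma part1 (s : StdSeq {xi} I0) : ¬ s.Terminates := by
  have key : ∀ i, Inv (s.inst i) := by
    intro i
    induction i with
    | zero =>
      rw [s.init]
      exact ⟨Val.c 0, rfl, by rintro ⟨⟩⟩
    | succ n ih =>
      rcases s.step n with h | ⟨-, h⟩
      · exact inv_step h
      · rwa [h]
  rintro ⟨i, hna⟩
  exact inv_not_noactive (key i) hna

/-! ### Parts 2 and 3 : the core chase -/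

lemma S_not_mem_I0 (v : Val) : (⟨RS.S, [v]⟩ : Atom RS) ∉ I0 := by
  rintro ⟨⟩

lemma active_I0_iff (g : ℕ → Val) : Active xi g I0 ↔ g 0 = Val.c 0 := by
  rw [active_iff]
  constructor
  · rintro ⟨hR, -⟩
    simpa using congrArg Atom.args (Set.mem_singleton_iff.mp hR)
  · intro h
    exact ⟨by rw [h]; rfl, S_not_mem_I0 _⟩

lemma mem_parRes_R (E : TGD RS → (ℕ → Val) → (ℕ → Val)) :
    (⟨RS.R, [Val.c 0]⟩ : Atom RS) ∈ ParRes {xi} I0 E := Or.inl rfl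

lemma mem_parRes_S (E : TGD RS → (ℕ → Val) → (ℕ → Val))
    (hE : GoodE {xi} I0 E) :
    (⟨RS.S, [Val.c 0]⟩ : Atom RS) ∈ ParRes {xi} I0 E := by
  have hact : Active xi (fun _ => Val.c 0) I0 := (active_I0_iff _).mpr rfl
  have hfe := hE.1 xi rfl _ hact
  have h0 : E xi (fun _ => Val.c 0) 0 = Val.c 0 :=
    ((eqOnBody_iff _ _).mp hfe.1).symm
  refine Or.inr ⟨xi, rfl, fun _ => Val.c 0, hact, ?_⟩
  rw [instT_head, h0]
  right; rfl

lemma parRes_char (E : TGD RS → (ℕ → Val) → (ℕ → Val))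
    (hE : GoodE {xi} I0 E) :
    ∀ b ∈ ParRes {xi} I0 E,
      b = ⟨RS.R, [Val.c 0]⟩ ∨ b = ⟨RS.S, [Val.c 0]⟩ ∨ ∃ k, b = ⟨RS.R, [Val.n k]⟩ := by
  rintro b (rfl | ⟨ζ, rfl, g, hact, hb⟩)
  · exact Or.inl rfl
  · have hfe := hE.1 xi rfl g hact
    have h0 : E xi g 0 = g 0 := ((eqOnBody_iff _ _).mp hfe.1).symm
    have hg0 : g 0 = Val.c 0 := (active_I0_iff g).mp hact
    obtain ⟨⟨k, hk⟩, -⟩ := hfe.2.1 1 one_mem_evars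
    rw [instT_head] at hb
    rcases hb with rfl | rfl
    · exact Or.inr (Or.inr ⟨k, by rw [hk]⟩)
    · exact Or.inr (Or.inl (by rw [h0, hg0]))

lemma no_retract_J0 : ¬ ∃ g, IsHom g J0 J0 ∧ (mapAtom g '' J0) ⊂ J0 := by
  rintro ⟨g, ⟨gcf, -⟩, hss⟩
  apply hss.2
  rintro b (rfl | rfl)
  · exact ⟨_, Or.inl rfl, by simp [mapAtom, gcf 0]⟩
  · exact ⟨_, Or.inr rfl, by simp [mapAtom, gcf 0]⟩

lemma core_parRes (E : TGD RS → (ℕ → Val) → (ℕ → Val))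
    (hE : GoodE {xi} I0 E) : IsCore (ParRes {xi} I0 E) J0 := by
  refine ⟨?_, ⟨fun v => match v with | Val.n _ => Val.c 0 | v => v, ⟨fun k => rfl, ?_⟩, ?_⟩,
    no_retract_J0⟩
  · rintro b (rfl | rfl)
    · exact mem_parRes_R E
    · exact mem_parRes_S E hE
  · intro b hb
    rcases parRes_char E hE b hb with rfl | rfl | ⟨k, rfl⟩
    · exact mem_parRes_R E
    · exact mem_parRes_S E hE
    · exact mem_parRes_R E
  · intro b hb
    rcases parRes_char E hE b hb with rfl | rfl | ⟨k, rfl⟩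
    · exact Or.inl rfl
    · exact Or.inr rfl
    · exact Or.inl rfl

lemma part3 (J : Inst RS) (h : CoreStep {xi} I0 J) : J = J0 := by
  rcases h with ⟨E, hE, hJP, ⟨h, ⟨hcf, -⟩, himg⟩, hnr⟩
  have hRJ : (⟨RS.R, [Val.c 0]⟩ : Atom RS) ∈ J := by
    have := himg _ (mem_parRes_R E)
    simpa [mapAtom, hcf 0] using this
  have hSJ : (⟨RS.S, [Val.c 0]⟩ : Atom RS) ∈ J := by
    have := himg _ (mem_parRes_S E hE)
    simpa [mapAtom, hcf 0] using this
  have honly : ∀ b ∈ J, b = ⟨RS.R, [Val.c 0]⟩ ∨ b = ⟨RS.S, [Val.c 0]⟩ := by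
    intro b hb
    rcases parRes_char E hE b (hJP hb) with h1 | h1 | ⟨k, h1⟩
    · exact Or.inl h1
    · exact Or.inr h1
    · exfalso
      apply hnr
      subst h1
      set g : Val → Val := fun v => if v = Val.n k then Val.c 0 else v with hg
      have maps : ∀ b' ∈ J, mapAtom g b' ∈ J := by
        intro b' hb'
        rcases parRes_char E hE b' (hJP hb') with rfl | rfl | ⟨m, rfl⟩
        · simpa [mapAtom, hg] using hRJ
        · simpa [mapAtom, hg] using hSJ
        · by_cases hm : (Val.n m : Val) = Val.n k
          · simpa [mapAtom, hg, hm] using hRJ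
          · simpa [mapAtom, hg, hm] using hb'
      refine ⟨g, ⟨fun m => by simp [hg], maps⟩, ?_, ?_⟩
      · rintro _ ⟨b', hb', rfl⟩; exact maps b' hb'
      · intro hsup
        obtain ⟨b', hb', heq⟩ := hsup hb
        rcases parRes_char E hE b' (hJP hb') with rfl | rfl | ⟨m, rfl⟩
        · simp [mapAtom, hg] at heq
        · exact RS.noConfusion (congrArg Atom.rel heq)
        · by_cases hm : (Val.n m : Val) = Val.n k
          · simp [mapAtom, hg, hm] at heq
          · simp [mapAtom, hg, hm] at heq
  ext b
  constructor
  · intro hb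
    rcases honly b hb with rfl | rfl
    · exact Or.inl rfl
    · exact Or.inr rfl
  · rintro (rfl | rfl)
    · exact hRJ
    · exact hSJ

def E0 : TGD RS → (ℕ → Val) → (ℕ → Val) := fun _ g v => if v = 0 then g 0 else Val.n 0

lemma goodE0 : GoodE {xi} I0 E0 := by
  constructor
  · rintro ζ rfl g hact
    refine ⟨?_, ?_, ?_⟩
    · intro v hv
      rw [varsOf_body] at hv
      rcases hv with rfl
      simp [E0]
    · intro v hv
      rw [mem_evars] at hv
      subst hv
      refine ⟨⟨0, by simp [E0]⟩, ?_⟩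
      simp only [E0, if_neg (by norm_num : (1:ℕ) ≠ 0)]
      rintro ⟨a, ha, hv⟩
      rcases ha with rfl
      simp [I0] at hv
    · intro v hv w hw _
      rw [mem_evars] at hv hw
      omega
  · rintro ζ₁ rfl ζ₂ rfl g₁ g₂ hact₁ hact₂ v hv w hw _
    rw [mem_evars] at hv hw
    refine ⟨rfl, ?_, by omega⟩
    rw [eqOnBody_iff, (active_I0_iff g₁).mp hact₁, (active_I0_iff g₂).mp hact₂]

lemma part2 : ∃ J, CoreStep {xi} I0 J := ⟨J0, E0, goodE0, core_parRes E0 goodE0⟩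

lemma part4 : NoActive {xi} J0 := by
  rintro ζ rfl g hact
  rw [active_iff] at hact
  rcases hact with ⟨hR, hS⟩
  rcases hR with hR | hR
  · have : g 0 = Val.c 0 := by simpa using congrArg Atom.args hR
    rw [this] at hS
    exact hS (Or.inr rfl)
  · exact RS.noConfusion (congrArg Atom.rel hR)

end Stmt7


/-- Σ = {R(x) → ∃z (R(z) ∧ S(x))}, I₀ = {R(a)}: no standard chase sequence
terminates, but the core chase terminates after one step in {R(a), S(a)},
which satisfies Σ (no active triggers). -/
theorem stmt7 :
    let ξ : TGD RS :=
      ⟨{⟨RS.R, [Sum.inl 0]⟩}, {⟨RS.R, [Sum.inl 1]⟩, ⟨RS.S, [Sum.inl 0]⟩}⟩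
    let I₀ : Inst RS := {⟨RS.R, [Val.c 0]⟩}
    let J₀ : Inst RS := {⟨RS.R, [Val.c 0]⟩, ⟨RS.S, [Val.c 0]⟩}
    (∀ s : StdSeq {ξ} I₀, ¬ s.Terminates) ∧
      (∃ J, CoreStep {ξ} I₀ J) ∧
      (∀ J, CoreStep {ξ} I₀ J → J = J₀) ∧
      NoActive {ξ} J₀ := by
  intro ξ I₀ J₀
  exact ⟨Stmt7.part1, Stmt7.part2, Stmt7.part3, Stmt7.part4⟩
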